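/- arXiv:1607.05978 — 3 statements merged into one kernel-verified Lean document; each statement's English description precedes it below -/
import Mathlib

section
/- Let ι be an index set, let (E_j)_{j∈ι} be real inner product spaces, let c : ι → (0,∞), and let ε > 0. Assume that the set S := { j ∈ ι : c_j ≥ ε² } is finite, that E_j is finite-dimensional for every j ∈ S, and that c_j ≠ ε² for every j ∈ ι. Let A := { w ∈ lp(E,2) : ∑_{j∈ι} c_j⁻¹ ‖w_j‖² ≤ 1 }. Then the smallest natural number n for which there exists a linear subspace M of lp(E,2) of dimension at most n with inf_{g∈M} ‖w − g‖ ≤ ε for all w ∈ A is equal to ∑_{j∈S} dim E_j. -/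
/-!
Let `S = {j | ε² ≤ c j}`. The families supported on `S` form a subspace of dimension
`∑_{j ∈ S} dim E j`, and truncating `w` to `S` costs `∑_{j ∉ S} ‖w j‖² ≤ ε² ∑ (c j)⁻¹ ‖w j‖² ≤ ε²`,
since `c j < ε²` off `S`. Conversely, a subspace `M` of smaller dimension is orthogonal to some
nonzero family supported on `S`; scaled to norm `√(min_S c) > ε` it still lies in the ellipsoid,
and its distance to `M` is at least its norm.
-/

open scoped ENNReal

namespace lp

variable {ι : Type*} {E : ι → Type*} [∀ j, NormedAddCommGroup (E j)]

theorem hasSum_norm_sq (f : lp E 2) : HasSum (fun j => ‖f j‖ ^ 2) (‖f‖ ^ 2) := by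
  simpa using lp.hasSum_norm (p := 2) (by norm_num) f

theorem norm_sq_le_tsum_of_norm_apply_sq_le {f : lp E 2} {b : ι → ℝ} (hb : Summable b)
    (h : ∀ j, ‖f j‖ ^ 2 ≤ b j) : ‖f‖ ^ 2 ≤ ∑' j, b j :=
  (hasSum_norm_sq f).tsum_eq ▸ (hasSum_norm_sq f).summable.tsum_le_tsum h hb

theorem norm_sq_eq_sum_of_forall_notMem_eq_zero {f : lp E 2} {s : Finset ι}
    (hf : ∀ j ∉ s, f j = 0) : ‖f‖ ^ 2 = ∑ j ∈ s, ‖f j‖ ^ 2 :=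
  (hasSum_norm_sq f).unique <| hasSum_sum_of_ne_finset_zero fun j hj => by simp [hf j hj]

section ExtendByZero

variable (𝕜 : Type*) [NormedRing 𝕜] [∀ j, Module 𝕜 (E j)] [∀ j, IsBoundedSMul 𝕜 (E j)]
  [DecidableEq ι] (p : ℝ≥0∞) (s : Finset ι)

noncomputable def extendByZero : (∀ j : s, E j) →ₗ[𝕜] lp E p :=
  ∑ j : s, (lsingle p (j : ι)).comp (LinearMap.proj j)

variable {𝕜 p s}

theorem extendByZero_apply (v : ∀ j : s, E j) (j : ι) :
    extendByZero 𝕜 p s v j = if h : j ∈ s then v ⟨j, h⟩ else 0 := by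
  simp only [extendByZero, LinearMap.sum_apply, LinearMap.comp_apply, lsingle_apply,
    LinearMap.proj_apply, coeFn_sum, Finset.sum_apply, lp.single_apply]
  split_ifs with h
  · rw [Finset.sum_eq_single ⟨j, h⟩
      (fun i _ hi => Pi.single_eq_of_ne' (fun e => hi (Subtype.ext e)) _) (by simp)]
    exact Pi.single_eq_same _ _
  · exact Finset.sum_eq_zero fun i _ =>
      Pi.single_eq_of_ne' (fun e : (i : ι) = j => h (e ▸ i.2)) _

theorem apply_eq_zero_of_mem_range_extendByZero {f : lp E p}
    (hf : f ∈ LinearMap.range (extendByZero 𝕜 p s)) {j : ι} (hj : j ∉ s) : f j = 0 := by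
  obtain ⟨v, rfl⟩ := hf
  simp [extendByZero_apply, hj]

theorem extendByZero_injective : Function.Injective (extendByZero 𝕜 p s (E := E)) := by
  intro v w hvw
  funext j
  simpa [extendByZero_apply] using congr_fun (congr_arg (fun f : lp E p => ⇑f) hvw) j

end ExtendByZero

theorem finrank_range_extendByZero {𝕜 : Type*} [NormedField 𝕜] [∀ j, NormedSpace 𝕜 (E j)]
    [DecidableEq ι] {p : ℝ≥0∞} {s : Finset ι} [∀ j : s, FiniteDimensional 𝕜 (E j)] :
    Module.finrank 𝕜 (LinearMap.range (extendByZero 𝕜 p s (E := E))) =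
      ∑ j ∈ s, Module.finrank 𝕜 (E j) := by
  rw [LinearMap.finrank_range_of_inj extendByZero_injective, Module.finrank_pi_fintype,
    Finset.sum_coe_sort s fun j => Module.finrank 𝕜 (E j)]

end lp

section Orthogonal

variable {𝕜 F : Type*} [RCLike 𝕜] [NormedAddCommGroup F] [InnerProductSpace 𝕜 F]

theorem Submodule.orthogonal_inf_ne_bot_of_finrank_lt {K V : Submodule 𝕜 F}
    [FiniteDimensional 𝕜 K] (h : Module.finrank 𝕜 K < Module.finrank 𝕜 V) :
    Kᗮ ⊓ V ≠ ⊥ := by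
  have hproj : LinearMap.ker (K.orthogonalProjectionOnto.toLinearMap ∘ₗ V.subtype) ≠ ⊥ :=
    fun hker => (LinearMap.finrank_le_finrank_of_injective (LinearMap.ker_eq_bot.1 hker)).not_gt h
  obtain ⟨v, hv, hv0⟩ := Submodule.ne_bot_iff _ |>.1 hproj
  exact (Submodule.ne_bot_iff _).2
    ⟨v, ⟨K.orthogonalProjectionOnto_eq_zero_iff.1 hv, v.2⟩, by simpa using hv0⟩

theorem Submodule.norm_le_infDist_of_mem_orthogonal {K : Submodule 𝕜 F} {x : F} (hx : x ∈ Kᗮ) :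
    ‖x‖ ≤ Metric.infDist x K := by
  refine (Metric.le_infDist ⟨0, K.zero_mem⟩).2 fun y hy => ?_
  have hxy : RCLike.re (inner 𝕜 x y) = 0 := by
    rw [Submodule.inner_left_of_mem_orthogonal hy hx, map_zero]
  have hsq : ‖x‖ ^ 2 ≤ ‖x - y‖ ^ 2 := by
    rw [@norm_sub_sq 𝕜, hxy]
    nlinarith [sq_nonneg ‖y‖]
  rw [dist_eq_norm]
  exact (pow_le_pow_iff_left₀ (norm_nonneg _) (norm_nonneg _) two_ne_zero).1 hsq

end Orthogonal

section Ellipsoid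

variable {ι : Type*} {E : ι → Type*} [∀ j, NormedAddCommGroup (E j)] {c : ι → ℝ} {w : lp E 2}

/-- The weighted sum is taken in `ℝ≥0∞`, so that a divergent series is not read as `0`. -/
def ellipsoid (c : ι → ℝ) : Set (lp E 2) :=
  {w | ∑' j, ENNReal.ofReal ((c j)⁻¹ * ‖w j‖ ^ 2) ≤ 1}

theorem summable_and_tsum_le_one_of_mem_ellipsoid (hc : ∀ j, 0 ≤ c j) (hw : w ∈ ellipsoid c) :
    Summable (fun j => (c j)⁻¹ * ‖w j‖ ^ 2) ∧ ∑' j, (c j)⁻¹ * ‖w j‖ ^ 2 ≤ 1 := by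
  have hnn : ∀ j, 0 ≤ (c j)⁻¹ * ‖w j‖ ^ 2 := fun j => by have := hc j; positivity
  have hsum : Summable fun j => (c j)⁻¹ * ‖w j‖ ^ 2 := by
    simpa only [ENNReal.toReal_ofReal (hnn _)] using
      ENNReal.summable_toReal (hw.trans_lt ENNReal.one_lt_top).ne
  refine ⟨hsum, ?_⟩
  rw [← ENNReal.ofReal_le_one, ENNReal.ofReal_tsum_of_nonneg hnn hsum]
  exact hw

theorem mem_ellipsoid_of_forall_notMem_eq_zero {s : Finset ι} {m : ℝ} (hm : 0 < m)
    (hw : ∀ j ∉ s, w j = 0) (hmc : ∀ j ∈ s, m ≤ c j) (hwm : ‖w‖ ^ 2 ≤ m) : w ∈ ellipsoid c := by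
  have hsum : ∑ j ∈ s, (c j)⁻¹ * ‖w j‖ ^ 2 ≤ 1 := calc
    _ ≤ ∑ j ∈ s, m⁻¹ * ‖w j‖ ^ 2 := Finset.sum_le_sum fun j hj => by gcongr; exact hmc j hj
    _ = m⁻¹ * ‖w‖ ^ 2 := by rw [← Finset.mul_sum, lp.norm_sq_eq_sum_of_forall_notMem_eq_zero hw]
    _ ≤ 1 := inv_mul_le_one_of_le₀ hwm hm.le
  show ∑' j, ENNReal.ofReal ((c j)⁻¹ * ‖w j‖ ^ 2) ≤ 1
  rw [tsum_eq_sum (s := s) fun j hj => by simp [hw j hj], ← ENNReal.ofReal_sum_of_nonneg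
    fun j hj => by have := hm.trans_le (hmc j hj); positivity]
  exact ENNReal.ofReal_le_one.2 hsum

theorem infDist_range_extendByZero_le (𝕜 : Type*) [NormedRing 𝕜] [∀ j, Module 𝕜 (E j)]
    [∀ j, IsBoundedSMul 𝕜 (E j)] [DecidableEq ι] {s : Finset ι} {ε : ℝ} (hc : ∀ j, 0 < c j)
    (hε : 0 ≤ ε) (hcs : ∀ j ∉ s, c j ≤ ε ^ 2) (hw : w ∈ ellipsoid c) :
    Metric.infDist w
      ((LinearMap.range (lp.extendByZero 𝕜 2 s) : Submodule 𝕜 (lp E 2)) : Set (lp E 2)) ≤ ε := by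
  obtain ⟨hsum, hle⟩ := summable_and_tsum_le_one_of_mem_ellipsoid (fun j => (hc j).le) hw
  set g := lp.extendByZero 𝕜 2 s fun j => w j
  have hcoord : ∀ j, ‖(w - g) j‖ ^ 2 ≤ ε ^ 2 * ((c j)⁻¹ * ‖w j‖ ^ 2) := by
    intro j
    by_cases hj : j ∈ s
    · simp only [g, lp.coeFn_sub, Pi.sub_apply, lp.extendByZero_apply, dif_pos hj, sub_self,
        norm_zero, zero_pow two_ne_zero]
      have := hc j
      positivity
    · have : 1 ≤ ε ^ 2 / c j := (one_le_div (hc j)).2 (hcs j hj)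
      calc ‖(w - g) j‖ ^ 2 = ‖w j‖ ^ 2 := by simp [g, lp.extendByZero_apply, hj]
        _ ≤ ε ^ 2 / c j * ‖w j‖ ^ 2 := le_mul_of_one_le_left (sq_nonneg _) this
        _ = _ := by ring
  have hnorm : ‖w - g‖ ^ 2 ≤ ε ^ 2 := calc
    ‖w - g‖ ^ 2 ≤ ∑' j, ε ^ 2 * ((c j)⁻¹ * ‖w j‖ ^ 2) :=
      lp.norm_sq_le_tsum_of_norm_apply_sq_le (hsum.mul_left _) hcoord
    _ = ε ^ 2 * ∑' j, (c j)⁻¹ * ‖w j‖ ^ 2 := tsum_mul_left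
    _ ≤ ε ^ 2 := mul_le_of_le_one_right (sq_nonneg ε) hle
  calc Metric.infDist w _
      ≤ dist w g := Metric.infDist_le_dist_of_mem (LinearMap.mem_range_self _ _)
    _ = ‖w - g‖ := dist_eq_norm _ _
    _ ≤ ε := (pow_le_pow_iff_left₀ (norm_nonneg _) hε two_ne_zero).1 hnorm

theorem sum_finrank_le_finrank_of_forall_infDist_le [∀ j, InnerProductSpace ℝ (E j)]
    [DecidableEq ι] {s : Finset ι} [∀ j : s, FiniteDimensional ℝ (E j)] {ε : ℝ} (hε : 0 ≤ ε)
    (hcs : ∀ j ∈ s, ε ^ 2 < c j) (M : Submodule ℝ (lp E 2)) [FiniteDimensional ℝ M]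
    (hM : ∀ w ∈ ellipsoid c, Metric.infDist w (M : Set (lp E 2)) ≤ ε) :
    ∑ j ∈ s, Module.finrank ℝ (E j) ≤ Module.finrank ℝ M := by
  by_contra! hlt
  set V := LinearMap.range (lp.extendByZero ℝ 2 s (E := E))
  obtain rfl | hs := s.eq_empty_or_nonempty
  · simp at hlt
  set m := s.inf' hs c
  have hm : ε ^ 2 < m := (Finset.lt_inf'_iff _).2 hcs
  have : Nontrivial (Mᗮ ⊓ V : Submodule ℝ (lp E 2)) :=
    Submodule.nontrivial_iff_ne_bot.2
      (M.orthogonal_inf_ne_bot_of_finrank_lt (by rwa [lp.finrank_range_extendByZero]))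
  obtain ⟨⟨w, hwM, hwV⟩, hw⟩ := exists_norm_eq ↥(Mᗮ ⊓ V) (Real.sqrt_nonneg m)
  replace hw : ‖w‖ = √m := hw
  have hεw : ε < ‖w‖ := hw ▸ (Real.lt_sqrt hε).2 hm
  have hwA : w ∈ ellipsoid c :=
    mem_ellipsoid_of_forall_notMem_eq_zero ((sq_nonneg ε).trans_lt hm)
      (fun j hj => lp.apply_eq_zero_of_mem_range_extendByZero hwV hj)
      (fun j hj => Finset.inf'_le c hj) (by rw [hw, Real.sq_sqrt ((sq_nonneg ε).trans hm.le)])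
  exact (hεw.trans_le (M.norm_le_infDist_of_mem_orthogonal hwM)).not_ge (hM w hwA)

end Ellipsoid

/-- Proposition 2.
Let `c j > 0`, `ε > 0`, assume `S = { j : c j ≥ ε² }` is finite, `E j` is finite dimensional
for `j ∈ S`, and `c j ≠ ε²` for all `j`.  For the ellipsoid
`A = { w ∈ lp E 2 : ∑ c j⁻¹ ‖w j‖² ≤ 1 }`, the smallest `n` for which some linear subspace
`M` of `lp E 2` of dimension at most `n` approximates every `w ∈ A` to within `ε` equals
`∑_{j ∈ S} dim E j`. -/
theorem stmt4 {ι : Type*} (E : ι → Type*) [∀ j, NormedAddCommGroup (E j)]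
    [∀ j, InnerProductSpace ℝ (E j)]
    (c : ι → ℝ) (hc : ∀ j, 0 < c j) (ε : ℝ) (hε : 0 < ε)
    (hS : {j | ε ^ 2 ≤ c j}.Finite)
    (hfin : ∀ j, ε ^ 2 ≤ c j → FiniteDimensional ℝ (E j))
    (hne : ∀ j, c j ≠ ε ^ 2) :
    sInf {n : ℕ | ∃ M : Submodule ℝ (lp E 2), FiniteDimensional ℝ M ∧
        Module.finrank ℝ M ≤ n ∧
        ∀ w : lp E 2, (∑' j, ENNReal.ofReal ((c j)⁻¹ * ‖w j‖ ^ 2) ≤ 1) →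
          Metric.infDist (w : lp E 2) (M : Set (lp E 2)) ≤ ε} =
      ∑ j ∈ hS.toFinset, Module.finrank ℝ (E j) := by
  classical
  have hs : ∀ j, j ∈ hS.toFinset ↔ ε ^ 2 ≤ c j := fun j => hS.mem_toFinset
  have : ∀ j : hS.toFinset, FiniteDimensional ℝ (E j) := fun j => hfin j ((hs j).1 j.2)
  refine IsLeast.csInf_eq ⟨⟨_, inferInstance, lp.finrank_range_extendByZero.le, fun w hw =>
    infDist_range_extendByZero_le ℝ hc hε.le (fun j hj => (not_le.1 (mt (hs j).2 hj)).le) hw⟩, ?_⟩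
  rintro n ⟨M, _, hMn, hM⟩
  exact (sum_finrank_le_finrank_of_forall_infDist_le hε.le
    (fun j hj => ((hs j).1 hj).lt_of_ne (hne j).symm) M hM).trans hMn
end

section
/- Let H be a real Hilbert space and (J,≤) a partially ordered set in which every principal down-set {i ∈ J : i ≤ j} is finite. Let (W_i)_{i∈J} be pairwise orthogonal closed subspaces of H with W_i ≠ {0} for every i, set V_j := ∑_{i ≤ j} W_i, let a, b : J → (0,∞), and let C > 0. Then the inequality ∑_{i∈J} b_i ‖w_i‖² ≤ C² · inf { ∑_{j∈F} a_j ‖v_j‖² : F ⊆ J finite, v_j ∈ V_j, ∑_{j∈F} v_j = f } holds for every f = ∑_i w_i (w_i ∈ W_i, finitely many nonzero) in the algebraic span of the W_i if and only if ∑_{j∈J, j ≥ i} a_j⁻¹ ≤ C² b_i⁻¹ for every i ∈ J (the sum on the left taken in [0,∞]). -/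
/-!
Testing the estimate on a single nonzero `e ∈ W i`, split as `e = ∑_{j ∈ G} ((a j)⁻¹ / λ) • e`
over a finite `G ⊆ {j | i ≤ j}` with `λ = ∑_{j ∈ G} (a j)⁻¹`, costs `‖e‖² / λ`, so the estimate
forces `λ * b i ≤ C²`. Conversely, given `f = ∑ k, w k = ∑ j, v j` with `v j ∈ V j`, expand
`v j = ∑_{k ≤ j} d j k` with `d j k ∈ W k`. Uniqueness of orthogonal decompositions gives
`w k = ∑_{j ≥ k} d j k`, weighted Cauchy–Schwarz and the condition give
`b k * ‖w k‖² ≤ C² * ∑ j, a j * ‖d j k‖²`, and summing over `k` with Pythagoras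
`‖v j‖² = ∑ k, ‖d j k‖²` yields the estimate.
-/

open scoped ENNReal

open Finset

theorem ENNReal.tsum_subtype_ofReal_le_ofReal_iff {ι : Type*} {p : ι → Prop} {f : ι → ℝ}
    (hf : ∀ i, 0 ≤ f i) {c : ℝ} (hc : 0 ≤ c) :
    ∑' i : {i // p i}, ENNReal.ofReal (f i) ≤ ENNReal.ofReal c ↔
      ∀ G : Finset ι, (∀ i ∈ G, p i) → ∑ i ∈ G, f i ≤ c := by
  classical
  rw [ENNReal.tsum_eq_iSup_sum, iSup_le_iff]
  constructor
  · intro h G hG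
    have := h (G.subtype p)
    rwa [sum_subtype_eq_sum_filter (fun i => ENNReal.ofReal (f i)), filter_true_of_mem hG,
      ← ENNReal.ofReal_sum_of_nonneg fun i _ => hf i, ENNReal.ofReal_le_ofReal_iff hc] at this
  · intro h G
    rw [← ENNReal.ofReal_sum_of_nonneg (f := fun i : {i // p i} => f i) fun i _ => hf i]
    exact ENNReal.ofReal_le_ofReal <| by
      simpa using h (G.map (Function.Embedding.subtype p)) (by simp +contextual)

theorem Real.le_mul_sInf {s : Set ℝ} (hs : s.Nonempty) {x c : ℝ} (hc : 0 ≤ c)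
    (h : ∀ r ∈ s, x ≤ c * r) : x ≤ c * sInf s := by
  rw [← smul_eq_mul, ← Real.sInf_smul_of_nonneg hc]
  exact le_csInf hs.smul_set (by rintro _ ⟨r, hr, rfl⟩; exact h r hr)

theorem sq_norm_sum_le_sum_inv_mul_sum_mul {ι E : Type*} [SeminormedAddCommGroup E]
    (s : Finset ι) (x : ι → E) {a : ι → ℝ} (ha : ∀ i ∈ s, 0 < a i) :
    ‖∑ i ∈ s, x i‖ ^ 2 ≤ (∑ i ∈ s, (a i)⁻¹) * ∑ i ∈ s, a i * ‖x i‖ ^ 2 :=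
  (pow_le_pow_left₀ (norm_nonneg _) (norm_sum_le s x) 2).trans <|
    sum_sq_le_sum_mul_sum_of_sq_le_mul s (fun i hi => (inv_pos.2 (ha i hi)).le)
      (fun i hi => mul_nonneg (ha i hi).le (sq_nonneg _))
      fun i hi => (inv_mul_cancel_left₀ (ha i hi).ne' _).ge

theorem mul_sq_norm_sum_le_of_sum_inv_mul_le {E J : Type*} [SeminormedAddCommGroup E] [LE J]
    {a : J → ℝ} (ha : ∀ j, 0 < a j) {k : J} {bk c : ℝ} (hbk : 0 ≤ bk)
    (hab : ∀ G : Finset J, (∀ j ∈ G, k ≤ j) → (∑ j ∈ G, (a j)⁻¹) * bk ≤ c)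
    {F : Finset J} {x : J → E} (hx : ∀ j ∈ F, ¬ k ≤ j → x j = 0) :
    bk * ‖∑ j ∈ F, x j‖ ^ 2 ≤ c * ∑ j ∈ F, a j * ‖x j‖ ^ 2 := by
  classical
  have hxF : ∀ j ∈ F, x j ≠ 0 → k ≤ j := fun j hj => not_imp_comm.1 (hx j hj)
  rw [← sum_filter_of_ne hxF,
    ← sum_filter_of_ne fun j hj h => hxF j hj fun h0 => h (by simp [h0])]
  set G := F.filter (k ≤ ·)
  calc bk * ‖∑ j ∈ G, x j‖ ^ 2 ≤ bk * ((∑ j ∈ G, (a j)⁻¹) * ∑ j ∈ G, a j * ‖x j‖ ^ 2) :=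
        mul_le_mul_of_nonneg_left (sq_norm_sum_le_sum_inv_mul_sum_mul G x fun j _ => ha j)
          hbk
    _ = (∑ j ∈ G, (a j)⁻¹) * bk * ∑ j ∈ G, a j * ‖x j‖ ^ 2 := by ring
    _ ≤ c * ∑ j ∈ G, a j * ‖x j‖ ^ 2 :=
        mul_le_mul_of_nonneg_right (hab G fun j hj => (mem_filter.1 hj).2)
          (sum_nonneg fun j _ => mul_nonneg (ha j).le (sq_nonneg _))

theorem Submodule.exists_finsupp_of_mem_iSup_iSup {R M ι : Type*} [Semiring R]
    [AddCommMonoid M] [Module R M] {p : ι → Submodule R M} {P : ι → Prop} {v : M}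
    (hv : v ∈ ⨆ i, ⨆ (_ : P i), p i) :
    ∃ c : ι →₀ M, (∀ i, c i ∈ p i) ∧ (∀ i, ¬ P i → c i = 0) ∧ ∑ i ∈ c.support, c i = v := by
  obtain ⟨c, hc, rfl⟩ := (Submodule.mem_iSup_iff_exists_finsupp _ v).1 hv
  exact ⟨c, fun i => (iSup_const_le : (⨆ _ : P i, p i) ≤ p i) (hc i),
    fun i hi => by simpa [iSup_neg hi] using hc i, rfl⟩

section

variable {H : Type*} [NormedAddCommGroup H] [InnerProductSpace ℝ H] {J : Type*}
  {W : J → Submodule ℝ H}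

theorem OrthogonalFamily.norm_sq_sum_of_mem
    (hW : OrthogonalFamily ℝ (fun i => W i) fun i => (W i).subtypeₗᵢ)
    {x : J → H} (hx : ∀ i, x i ∈ W i) (s : Finset J) :
    ‖∑ i ∈ s, x i‖ ^ 2 = ∑ i ∈ s, ‖x i‖ ^ 2 :=
  hW.norm_sum (fun i => ⟨x i, hx i⟩) s

theorem OrthogonalFamily.eq_of_sum_eq_sum
    (hW : OrthogonalFamily ℝ (fun i => W i) fun i => (W i).subtypeₗᵢ)
    {x y : J → H} (hx : ∀ i, x i ∈ W i) (hy : ∀ i, y i ∈ W i) {s : Finset J}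
    (h : ∑ i ∈ s, x i = ∑ i ∈ s, y i) : ∀ i ∈ s, x i = y i := by
  have h0 : ∑ i ∈ s, ‖x i - y i‖ ^ 2 = 0 := by
    rw [← hW.norm_sq_sum_of_mem fun i => sub_mem (hx i) (hy i), sum_sub_distrib, h]
    simp
  intro i hi
  simpa [sub_eq_zero] using (sum_eq_zero_iff_of_nonneg fun i _ => sq_nonneg _).1 h0 i hi

-- `sInf (decompositionCosts W a f)` is the paper's squared `H^∞_{V,a}`-norm of `f`.
def decompositionCosts [LE J] (W : J → Submodule ℝ H) (a : J → ℝ) (f : H) : Set ℝ :=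
  {r | ∃ (F : Finset J) (v : J → H), (∀ j ∈ F, v j ∈ (⨆ i ≤ j, W i : Submodule ℝ H)) ∧
    ∑ j ∈ F, v j = f ∧ r = ∑ j ∈ F, a j * ‖v j‖ ^ 2}

theorem sum_mem_decompositionCosts [Preorder J] {w : J → H} (hw : ∀ i, w i ∈ W i) (a : J → ℝ)
    (T : Finset J) : ∑ i ∈ T, a i * ‖w i‖ ^ 2 ∈ decompositionCosts W a (∑ i ∈ T, w i) :=
  ⟨T, w, fun j _ => le_iSup₂ (f := fun i (_ : i ≤ j) => W i) j le_rfl (hw j), rfl, rfl⟩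

theorem bddBelow_decompositionCosts [LE J] {a : J → ℝ} (ha : ∀ j, 0 ≤ a j) (f : H) :
    BddBelow (decompositionCosts W a f) :=
  ⟨0, by
    rintro _ ⟨F, v, -, -, rfl⟩
    exact sum_nonneg fun j _ => mul_nonneg (ha j) (sq_nonneg _)⟩

theorem sInf_decompositionCosts_le [LE J] {a : J → ℝ} (ha : ∀ j, 0 < a j) {i : J} {e : H}
    (he : e ∈ W i) {G : Finset J} (hG : ∀ j ∈ G, i ≤ j) (hGne : G.Nonempty) :
    sInf (decompositionCosts W a e) ≤ ‖e‖ ^ 2 / ∑ j ∈ G, (a j)⁻¹ := by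
  set lam := ∑ j ∈ G, (a j)⁻¹ with hlam_def
  have hlam : 0 < lam := sum_pos (fun j _ => inv_pos.2 (ha j)) hGne
  -- the optimal splitting: shares proportional to `(a j)⁻¹`
  refine csInf_le (bddBelow_decompositionCosts (fun j => (ha j).le) e)
    ⟨G, fun j => ((a j)⁻¹ / lam) • e, fun j hj => Submodule.smul_mem _ _
      (le_iSup₂ (f := fun i (_ : i ≤ j) => W i) i (hG j hj) he), ?_, ?_⟩
  · rw [← sum_smul, ← sum_div, div_self hlam.ne', one_smul]
  · have hj : ∀ j ∈ G,
        a j * ‖((a j)⁻¹ / lam) • e‖ ^ 2 = (a j)⁻¹ * (‖e‖ ^ 2 / lam ^ 2) := by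
      intro j _
      rw [norm_smul, mul_pow, Real.norm_eq_abs, sq_abs]
      field_simp [(ha j).ne']
    rw [sum_congr rfl hj, ← sum_mul, ← hlam_def]
    clear_value lam
    field_simp

theorem sum_inv_mul_le_of_mul_sq_norm_le_mul_sInf [LE J] {a : J → ℝ} (ha : ∀ j, 0 < a j)
    {i : J} {e : H} (he : e ∈ W i) (he0 : e ≠ 0) {bi c : ℝ} (hc : 0 ≤ c)
    (h : bi * ‖e‖ ^ 2 ≤ c * sInf (decompositionCosts W a e)) {G : Finset J}
    (hG : ∀ j ∈ G, i ≤ j) : (∑ j ∈ G, (a j)⁻¹) * bi ≤ c := by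
  rcases G.eq_empty_or_nonempty with rfl | hGne
  · simpa using hc
  have hlam : 0 < ∑ j ∈ G, (a j)⁻¹ := sum_pos (fun j _ => inv_pos.2 (ha j)) hGne
  have h' := h.trans (mul_le_mul_of_nonneg_left (sInf_decompositionCosts_le ha he hG hGne) hc)
  refine le_of_mul_le_mul_right ?_ (pow_pos (norm_pos_iff.2 he0) 2)
  calc (∑ j ∈ G, (a j)⁻¹) * bi * ‖e‖ ^ 2 = (∑ j ∈ G, (a j)⁻¹) * (bi * ‖e‖ ^ 2) := by
        ring
    _ ≤ (∑ j ∈ G, (a j)⁻¹) * (c * (‖e‖ ^ 2 / ∑ j ∈ G, (a j)⁻¹)) :=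
      mul_le_mul_of_nonneg_left h' hlam.le
    _ = c * ‖e‖ ^ 2 := by rw [mul_div_assoc', mul_div_assoc', mul_div_cancel_left₀ _ hlam.ne']

theorem sum_mul_sq_norm_le_of_mem_decompositionCosts [LE J]
    (hW : OrthogonalFamily ℝ (fun i => W i) fun i => (W i).subtypeₗᵢ)
    {a b : J → ℝ} (ha : ∀ j, 0 < a j) (hb : ∀ i, 0 ≤ b i) {c : ℝ}
    (hab : ∀ i (G : Finset J), (∀ j ∈ G, i ≤ j) → (∑ j ∈ G, (a j)⁻¹) * b i ≤ c)
    {w : J → H} (hw : ∀ i, w i ∈ W i) {T : Finset J} (hwT : ∀ i ∉ T, w i = 0) {r : ℝ}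
    (hr : r ∈ decompositionCosts W a (∑ i ∈ T, w i)) :
    ∑ i ∈ T, b i * ‖w i‖ ^ 2 ≤ c * r := by
  classical
  obtain ⟨F, v, hvV, hsum, rfl⟩ := hr
  choose! d hdW hdle hdv using fun j (hj : j ∈ F) =>
    Submodule.exists_finsupp_of_mem_iSup_iSup (hvV j hj)
  set S := T ∪ F.biUnion fun j => (d j).support
  have hTS : T ⊆ S := subset_union_left
  have hvS : ∀ j ∈ F, ∑ i ∈ S, d j i = v j := fun j hj => by
    rw [← hdv j hj]
    exact (sum_subset (subset_biUnion_of_mem _ hj |>.trans subset_union_right)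
      fun i _ hi => Finsupp.notMem_support_iff.1 hi).symm
  have hcomp : ∀ k ∈ S, w k = ∑ j ∈ F, d j k :=
    hW.eq_of_sum_eq_sum hw (fun k => sum_mem fun j hj => hdW j hj k) <| by
      rw [sum_comm, sum_congr rfl hvS, hsum, sum_subset hTS fun i _ hi => hwT i hi]
  calc ∑ i ∈ T, b i * ‖w i‖ ^ 2 = ∑ k ∈ S, b k * ‖∑ j ∈ F, d j k‖ ^ 2 := by
        rw [sum_subset hTS fun i _ hi => by simp [hwT i hi]]
        exact sum_congr rfl fun k hk => by rw [hcomp k hk]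
    _ ≤ ∑ k ∈ S, c * ∑ j ∈ F, a j * ‖d j k‖ ^ 2 :=
        sum_le_sum fun k _ => mul_sq_norm_sum_le_of_sum_inv_mul_le ha (hb k) (hab k)
          fun j hj hkj => hdle j hj k hkj
    _ = c * ∑ j ∈ F, a j * ‖v j‖ ^ 2 := by
        rw [← mul_sum, sum_comm]
        congr 1
        refine sum_congr rfl fun j hj => ?_
        rw [← mul_sum, ← hvS j hj, hW.norm_sq_sum_of_mem (hdW j hj)]

end

theorem stmt9_general {H : Type*} [NormedAddCommGroup H] [InnerProductSpace ℝ H]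
    {J : Type*} [PartialOrder J]
    (W : J → Submodule ℝ H)
    (hortho : ∀ i j, i ≠ j → ∀ u ∈ W i, ∀ v ∈ W j, inner ℝ u v = (0 : ℝ))
    (hWne : ∀ i, W i ≠ ⊥)
    (a b : J → ℝ) (ha : ∀ j, 0 < a j) (hb : ∀ j, 0 < b j) (C : ℝ) :
    (∀ (w : J → H), (∀ i, w i ∈ W i) → ∀ hwfin : (Function.support w).Finite,
        ∑' i, b i * ‖w i‖ ^ 2 ≤
          C ^ 2 * sInf {r : ℝ | ∃ (F : Finset J) (v : J → H),
            (∀ j ∈ F, v j ∈ (⨆ i ≤ j, W i : Submodule ℝ H)) ∧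
            (∑ j ∈ F, v j) = ∑ i ∈ hwfin.toFinset, w i ∧
            r = ∑ j ∈ F, a j * ‖v j‖ ^ 2}) ↔
    (∀ i : J, ∑' j : {j : J // i ≤ j}, ENNReal.ofReal ((a (j : J))⁻¹) ≤
        ENNReal.ofReal (C ^ 2 * (b i)⁻¹)) := by
  classical
  have hW : OrthogonalFamily ℝ (fun i => W i) fun i => (W i).subtypeₗᵢ :=
    fun i j hij u v => hortho i j hij u u.2 v v.2
  rw [forall_congr' fun i => ENNReal.tsum_subtype_ofReal_le_ofReal_iff
    (fun j => (inv_pos.2 (ha j)).le) (mul_nonneg (sq_nonneg C) (inv_nonneg.2 (hb i).le))]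
  simp only [le_mul_inv_iff₀ (hb _)]
  constructor
  · intro hmain i G hG
    obtain ⟨e, he, he0⟩ := (Submodule.ne_bot_iff _).1 (hWne i)
    have hsingle : ∀ k, Pi.single (M := fun _ => H) i e k ∈ W k := fun k => by
      rcases eq_or_ne k i with rfl | hk <;> simp [*]
    have hfin := (Set.finite_singleton i).subset (Pi.support_single_subset (i := i) (a := e))
    have hsum : ∑ k ∈ hfin.toFinset, Pi.single i e k = e := by
      rw [sum_pi_single', if_pos (by simpa using he0)]
    have h := hmain _ hsingle hfin
    change _ ≤ _ * sInf (decompositionCosts W a _) at h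
    rw [tsum_eq_single i fun k hk => by simp [hk], hsum, Pi.single_eq_same] at h
    exact sum_inv_mul_le_of_mul_sq_norm_le_mul_sInf ha he he0 (sq_nonneg C) h hG
  · intro hcond w hw hwfin
    rw [tsum_eq_sum' (s := hwfin.toFinset) fun k hk => by simp_all]
    exact Real.le_mul_sInf ⟨_, sum_mem_decompositionCosts hw a _⟩ (sq_nonneg C)
      fun r hr => sum_mul_sq_norm_le_of_mem_decompositionCosts hW ha (fun i => (hb i).le) hcond
        hw (fun i hi => by simpa using hi) hr

/-- Corollary 1.
In the setting of pairwise orthogonal closed nonzero subspaces `(W i)` of a real Hilbert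
space `H`, indexed by a poset `J` with finite principal down-sets, with `V j = ∑_{i ≤ j} W i`
and positive weights `a, b` and `C > 0`: the estimate
`∑ i, b i ‖w i‖² ≤ C² inf { ∑_{j∈F} a j ‖v j‖² : v j ∈ V j, ∑_{j∈F} v j = f }` holds for every
`f = ∑ i, w i` (`w i ∈ W i`, finitely many nonzero) in the algebraic span of the `W i`
if and only if `∑_{j ≥ i} (a j)⁻¹ ≤ C² (b i)⁻¹` for every `i` (sum taken in `[0,∞]`). -/
theorem stmt9 {H : Type*} [NormedAddCommGroup H] [InnerProductSpace ℝ H] [CompleteSpace H]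
    {J : Type*} [PartialOrder J] (hJ : ∀ j : J, {i | i ≤ j}.Finite)
    (W : J → Submodule ℝ H) (hWc : ∀ i, IsClosed (W i : Set H))
    (hortho : ∀ i j, i ≠ j → ∀ u ∈ W i, ∀ v ∈ W j, inner ℝ u v = (0 : ℝ))
    (hWne : ∀ i, W i ≠ ⊥)
    (a b : J → ℝ) (ha : ∀ j, 0 < a j) (hb : ∀ j, 0 < b j) (C : ℝ) (hC : 0 < C) :
    (∀ (w : J → H), (∀ i, w i ∈ W i) → ∀ hwfin : (Function.support w).Finite,
        ∑' i, b i * ‖w i‖ ^ 2 ≤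
          C ^ 2 * sInf {r : ℝ | ∃ (F : Finset J) (v : J → H),
            (∀ j ∈ F, v j ∈ (⨆ i ≤ j, W i : Submodule ℝ H)) ∧
            (∑ j ∈ F, v j) = ∑ i ∈ hwfin.toFinset, w i ∧
            r = ∑ j ∈ F, a j * ‖v j‖ ^ 2}) ↔
    (∀ i : J, ∑' j : {j : J // i ≤ j}, ENNReal.ofReal ((a (j : J))⁻¹) ≤
        ENNReal.ofReal (C ^ 2 * (b i)⁻¹)) :=
  stmt9_general W hortho hWne a b ha hb C
end

section
/- Let q > 0 and let γ, α assign positive real values to finite subsets of ℕ, and let C', C'' > 0 be constants satisfying: (i) for every finite ω ⊆ ℕ, ∑_{ω̂ ⊇ ω} q^{|ω̂|} α(ω̂) ≤ C' q^{|ω|} α(ω); and (ii) for every finite ω ⊆ ℕ, ∑_{ω' ⊆ ω} α(ω')/γ(ω') ≤ C'' α(ω)/γ(ω). Then for every finite ω₀ ⊆ ℕ and every family x of elements of [0,∞] indexed by the finite subsets of ℕ, ∑_{ω ⊇ ω₀} γ(ω)⁻¹ ( ∑_{ω̂ ⊇ ω} q^{(|ω̂|−|ω|)/2} x(ω̂)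 )² ≤ C' C'' ∑_{ω̂ ⊇ ω₀} γ(ω̂)⁻¹ x(ω̂)², where the outer sums run over all finite supersets of ω₀. -/
/-!
For fixed `ω`, weighted Cauchy–Schwarz, splitting `q^{(|ω̂|-|ω|)/2} x(ω̂)` as the product of
`(q^{|ω̂|} α(ω̂) / q^{|ω|})^{1/2}` and `α(ω̂)^{-1/2} x(ω̂)`, together with (i) gives
`(∑_{ω̂ ⊇ ω} q^{(|ω̂|-|ω|)/2} x(ω̂))² ≤ C' α(ω) ∑_{ω̂ ⊇ ω} α(ω̂)⁻¹ x(ω̂)²`.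
Summing against `γ(ω)⁻¹` over `ω ⊇ ω₀` and exchanging the two sums, the weight of `x(ω̂)²` becomes
`α(ω̂)⁻¹ ∑_{ω₀ ⊆ ω ⊆ ω̂} α(ω)/γ(ω)`, which (ii) bounds by `C'' γ(ω̂)⁻¹`.
-/

open scoped ENNReal
open MeasureTheory

namespace ENNReal

theorem rpow_two_inv_sq (x : ℝ≥0∞) : (x ^ (2⁻¹ : ℝ)) ^ 2 = x := by
  exact_mod_cast rpow_inv_natCast_pow two_ne_zero x

theorem tsum_mul_sq_le_sq_mul_sq {ι : Type*} (f g : ι → ℝ≥0∞) :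
    (∑' i, f i * g i) ^ 2 ≤ (∑' i, f i ^ 2) * ∑' i, g i ^ 2 := by
  let _ : MeasurableSpace ι := ⊤
  have holder : ∑' i, f i * g i ≤
      (∑' i, f i ^ 2) ^ (2⁻¹ : ℝ) * (∑' i, g i ^ 2) ^ (2⁻¹ : ℝ) := by
    simpa only [lintegral_count, rpow_two, one_div, Pi.mul_apply] using
      lintegral_mul_le_Lp_mul_Lq Measure.count Real.HolderConjugate.two_two
        (measurable_from_top (f := f)).aemeasurable (measurable_from_top (f := g)).aemeasurable
  calc (∑' i, f i * g i) ^ 2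
      ≤ ((∑' i, f i ^ 2) ^ (2⁻¹ : ℝ) * (∑' i, g i ^ 2) ^ (2⁻¹ : ℝ)) ^ 2 := by gcongr
    _ = (∑' i, f i ^ 2) * ∑' i, g i ^ 2 := by rw [mul_pow, rpow_two_inv_sq, rpow_two_inv_sq]

theorem tsum_sq_le_tsum_mul_tsum_of_sq_le_mul {ι : Type*} {r f g : ι → ℝ≥0∞}
    (h : ∀ i, r i ^ 2 ≤ f i * g i) : (∑' i, r i) ^ 2 ≤ (∑' i, f i) * ∑' i, g i := by
  have hr (i : ι) : r i ≤ f i ^ (2⁻¹ : ℝ) * g i ^ (2⁻¹ : ℝ) := by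
    rw [← ENNReal.pow_le_pow_left_iff two_ne_zero, mul_pow, rpow_two_inv_sq,
      rpow_two_inv_sq]
    exact h i
  calc (∑' i, r i) ^ 2 ≤ (∑' i, f i ^ (2⁻¹ : ℝ) * g i ^ (2⁻¹ : ℝ)) ^ 2 := by
        gcongr with i; exact hr i
    _ ≤ _ := tsum_mul_sq_le_sq_mul_sq _ _
    _ = (∑' i, f i) * ∑' i, g i := by simp only [rpow_two_inv_sq]

theorem tsum_Ici_tsum_Ici_eq_tsum_sum_Icc {α : Type*} [Preorder α] [LocallyFiniteOrder α]
    (a : α) (F : α → α → ℝ≥0∞) :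
    ∑' b : {b // a ≤ b}, ∑' c : {c // (b : α) ≤ c}, F b c =
      ∑' c : {c // a ≤ c}, ∑ b ∈ Finset.Icc a c, F b c := by
  classical
  calc _ = ∑' b, {b | a ≤ b}.indicator (fun b => ∑' c, {c | b ≤ c}.indicator (F b) c) b := by
        simp only [← tsum_subtype]; rfl
    _ = ∑' b, ∑' c, (Finset.Icc a c : Set α).indicator (F · c) b := by
        refine tsum_congr fun b => ?_
        by_cases hab : a ≤ b <;> simp [Set.indicator_apply, hab]
    _ = ∑' c, ∑ b ∈ Finset.Icc a c, F b c := by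
        rw [ENNReal.tsum_comm]
        exact tsum_congr fun c => (sum_eq_tsum_indicator _ _).symm
    _ = _ := (tsum_subtype_eq_of_support_subset fun c hc => ?_).symm
  by_contra hac
  exact hc (by simp only [Finset.Icc_eq_empty hac, Finset.sum_empty])

end ENNReal

open ENNReal

theorem sq_tsum_supersets_le {ι : Type*} {q : ℝ} (hq : 0 < q) {α : Finset ι → ℝ}
    (hα : ∀ ω, 0 < α ω) {C' : ℝ} {ω : Finset ι}
    (h : ∑' σ : {σ // ω ⊆ σ}, ENNReal.ofReal (q ^ (σ : Finset ι).card * α σ) ≤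
      ENNReal.ofReal (C' * q ^ ω.card * α ω))
    (x : Finset ι → ℝ≥0∞) :
    (∑' σ : {σ // ω ⊆ σ},
        ENNReal.ofReal (q ^ ((((σ : Finset ι).card : ℝ) - (ω.card : ℝ)) / 2)) * x σ) ^ 2 ≤
      ENNReal.ofReal (C' * α ω) * ∑' σ : {σ // ω ⊆ σ}, (ENNReal.ofReal (α σ))⁻¹ * x σ ^ 2 := by
  have hqω : 0 < q ^ ω.card := pow_pos hq _
  have split (σ : Finset ι) :
      (ENNReal.ofReal (q ^ (((σ.card : ℝ) - (ω.card : ℝ)) / 2)) * x σ) ^ 2 =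
        ENNReal.ofReal (q ^ σ.card * α σ) * (ENNReal.ofReal (q ^ ω.card))⁻¹ *
          ((ENNReal.ofReal (α σ))⁻¹ * x σ ^ 2) := by
    have hsq : (q ^ (((σ.card : ℝ) - (ω.card : ℝ)) / 2)) ^ 2 =
        q ^ σ.card * α σ * (q ^ ω.card)⁻¹ * (α σ)⁻¹ := by
      rw [← Real.rpow_mul_natCast hq.le, Nat.cast_ofNat, div_mul_cancel₀ _ two_ne_zero,
        Real.rpow_sub hq, Real.rpow_natCast, Real.rpow_natCast]
      field_simp [(hα σ).ne']
    rw [mul_pow, ← ofReal_pow (Real.rpow_nonneg hq.le _), hsq,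
      ofReal_mul' (inv_nonneg.2 (hα _).le), ofReal_mul' (inv_nonneg.2 hqω.le),
      ofReal_inv_of_pos hqω, ofReal_inv_of_pos (hα _)]
    ring
  calc _ ≤ (∑' σ : {σ // ω ⊆ σ},
          ENNReal.ofReal (q ^ (σ : Finset ι).card * α σ) * (ENNReal.ofReal (q ^ ω.card))⁻¹) *
        ∑' σ : {σ // ω ⊆ σ}, (ENNReal.ofReal (α σ))⁻¹ * x σ ^ 2 :=
      tsum_sq_le_tsum_mul_tsum_of_sq_le_mul fun σ => (split σ).le
    _ ≤ ENNReal.ofReal (C' * q ^ ω.card * α ω) * (ENNReal.ofReal (q ^ ω.card))⁻¹ *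
        ∑' σ : {σ // ω ⊆ σ}, (ENNReal.ofReal (α σ))⁻¹ * x σ ^ 2 := by
      rw [ENNReal.tsum_mul_right]
      gcongr
    _ = _ := by
      rw [← ofReal_inv_of_pos hqω, ← ofReal_mul' (inv_nonneg.2 hqω.le)]
      congr 2
      field_simp

theorem sum_Icc_ofReal_div_mul_inv_le {ι : Type*} [DecidableEq ι] {α γ : Finset ι → ℝ}
    (hα : ∀ ω, 0 < α ω) (hγ : ∀ ω, 0 < γ ω) {C : ℝ} (hC : 0 ≤ C) (ω₀ : Finset ι)
    {σ : Finset ι} (h : ∑ ω ∈ σ.powerset, α ω / γ ω ≤ C * α σ / γ σ) :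
    ∑ ω ∈ Finset.Icc ω₀ σ, ENNReal.ofReal (α ω / γ ω) * (ENNReal.ofReal (α σ))⁻¹ ≤
      ENNReal.ofReal C * ENNReal.ofReal (γ σ)⁻¹ := by
  rw [← Finset.sum_mul, ← ofReal_sum_of_nonneg fun ω _ => (div_pos (hα ω) (hγ ω)).le,
    ← ofReal_inv_of_pos (hα σ), ← ofReal_mul' (inv_nonneg.2 (hα σ).le), ← ofReal_mul hC]
  refine ofReal_le_ofReal ?_
  calc _ ≤ C * α σ / γ σ * (α σ)⁻¹ := by
        refine mul_le_mul_of_nonneg_right (le_trans ?_ h) (inv_pos.2 (hα σ)).le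
        refine Finset.sum_le_sum_of_subset_of_nonneg ?_ fun ω _ _ => (div_pos (hα ω) (hγ ω)).le
        rw [Finset.Icc_eq_filter_powerset]
        exact Finset.filter_subset _ _
    _ = C * (γ σ)⁻¹ := by field_simp [(hα σ).ne']

/-- restricted-sum version of the core estimate, used for Corollary 2.
Under the same hypotheses on `q, γ, α, C', C''` as in the proof of Proposition 5, for every
finite `ω₀ ⊆ ℕ` and every `[0,∞]`-valued family `x` indexed by finite subsets of `ℕ`,
`∑_{ω ⊇ ω₀} γ(ω)⁻¹ (∑_{ω̂ ⊇ ω} q^{(|ω̂|-|ω|)/2} x(ω̂))² ≤ C' C'' ∑_{ω̂ ⊇ ω₀} γ(ω̂)⁻¹ x(ω̂)²`. -/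
theorem stmt14 (q : ℝ) (hq : 0 < q) (γ α : Finset ℕ → ℝ)
    (hγ : ∀ ω, 0 < γ ω) (hα : ∀ ω, 0 < α ω)
    (C' C'' : ℝ) (hC' : 0 < C') (hC'' : 0 < C'')
    (h1 : ∀ ω : Finset ℕ,
      ∑' σ : {σ : Finset ℕ // ω ⊆ σ},
          ENNReal.ofReal (q ^ (σ : Finset ℕ).card * α (σ : Finset ℕ)) ≤
        ENNReal.ofReal (C' * q ^ ω.card * α ω))
    (h2 : ∀ ω : Finset ℕ,
      ∑ ω' ∈ ω.powerset, α ω' / γ ω' ≤ C'' * α ω / γ ω) :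
    ∀ (ω₀ : Finset ℕ) (x : Finset ℕ → ℝ≥0∞),
      ∑' ω : {ω : Finset ℕ // ω₀ ⊆ ω}, ENNReal.ofReal ((γ (ω : Finset ℕ))⁻¹) *
          (∑' σ : {σ : Finset ℕ // (ω : Finset ℕ) ⊆ σ},
            ENNReal.ofReal
                (q ^ ((((σ : Finset ℕ).card : ℝ) - ((ω : Finset ℕ).card : ℝ)) / 2)) *
              x (σ : Finset ℕ)) ^ 2 ≤
        ENNReal.ofReal (C' * C'') *
          ∑' σ : {σ : Finset ℕ // ω₀ ⊆ σ},
            ENNReal.ofReal ((γ (σ : Finset ℕ))⁻¹) * x (σ : Finset ℕ) ^ 2 := by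
  intro ω₀ x
  calc _ ≤ ∑' ω : {ω // ω₀ ⊆ ω}, ENNReal.ofReal (γ ω)⁻¹ * (ENNReal.ofReal (C' * α ω) *
          ∑' σ : {σ // (ω : Finset ℕ) ⊆ σ}, (ENNReal.ofReal (α σ))⁻¹ * x σ ^ 2) := by
        gcongr with ω
        exact sq_tsum_supersets_le hq hα (h1 ω) x
    _ = ENNReal.ofReal C' * ∑' ω : {ω // ω₀ ⊆ ω}, ∑' σ : {σ // (ω : Finset ℕ) ⊆ σ},
          ENNReal.ofReal (α ω / γ ω) * (ENNReal.ofReal (α σ))⁻¹ * x σ ^ 2 := by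
        simp only [← ENNReal.tsum_mul_left]
        refine tsum_congr fun ω => tsum_congr fun σ => ?_
        rw [ofReal_mul hC'.le, div_eq_mul_inv, ofReal_mul (hα _).le]
        ring
    _ = ENNReal.ofReal C' * ∑' σ : {σ // ω₀ ⊆ σ}, ∑ ω ∈ Finset.Icc ω₀ σ,
          ENNReal.ofReal (α ω / γ ω) * (ENNReal.ofReal (α σ))⁻¹ * x σ ^ 2 :=
        congrArg _ (tsum_Ici_tsum_Ici_eq_tsum_sum_Icc ω₀
          fun ω σ => ENNReal.ofReal (α ω / γ ω) * (ENNReal.ofReal (α σ))⁻¹ * x σ ^ 2)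
    _ ≤ ENNReal.ofReal C' * ∑' σ : {σ // ω₀ ⊆ σ},
          ENNReal.ofReal C'' * ENNReal.ofReal (γ σ)⁻¹ * x σ ^ 2 := by
        gcongr with σ
        rw [← Finset.sum_mul]
        gcongr
        exact sum_Icc_ofReal_div_mul_inv_le hα hγ hC''.le ω₀ (h2 σ)
    _ = _ := by
        simp only [ofReal_mul hC'.le, ← ENNReal.tsum_mul_left, mul_assoc]
end
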